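/- arXiv:2406.06030 — 6 statements merged into one kernel-verified Lean document; each statement's English description precedes it below -/
import Mathlib

section
/- Matrix core of Theorem C. Let a₁₂, a₁₃, a₂₁, a₂₃, a₃₁, a₃₂, v₁, v₂, v₃ be elements of ZMod 3 with a₁₃ = 0, a₁₂ ≠ 0, a₂₃ ≠ 0, v₂ ≠ 0, and v₃ ≠ 0 (a₂₁, a₃₁, a₃₂, v₁ arbitrary). Then the matrix M₃ has rank exactly 2 over ZMod 3. -/
open Matrix

noncomputable section

/-- The 3×3 system matrix (formula (3)) of a cyclic cubic field whose conductor
has `t = 3` prime divisors. -/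
def M3 (a12 a13 a21 a23 a31 a32 v1 v2 v3 : ZMod 3) :
    Matrix (Fin 3) (Fin 3) (ZMod 3) :=
  !![-a12 * v2 - a13 * v3, a21 * v1, a31 * v1;
     a12 * v2, -a21 * v1 - a23 * v3, a32 * v2;
     a13 * v3, a23 * v3, -a31 * v1 - a32 * v2]

/-- **Matrix core of Theorem C.**
If `a₁₃ = 0`, `a₁₂ ≠ 0`, `a₂₃ ≠ 0`, `v₂ ≠ 0` and `v₃ ≠ 0`, then the system
matrix `M3` has rank exactly 2 over `ZMod 3`. -/
theorem M3_rank_eq_two_of_theoremC (a12 a13 a21 a23 a31 a32 v1 v2 v3 : ZMod 3)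
    (h13 : a13 = 0) (h12 : a12 ≠ 0) (h23 : a23 ≠ 0)
    (hv2 : v2 ≠ 0) (hv3 : v3 ≠ 0) :
    (M3 a12 a13 a21 a23 a31 a32 v1 v2 v3).rank = 2 := by
  subst h13
  set M := M3 a12 0 a21 a23 a31 a32 v1 v2 v3 with hM
  -- Upper bound: rank M ≤ 2, since (1,1,1) · M = 0.
  have hub : M.rank ≤ 2 := by
    have hmul : (!![1, 1, 1] : Matrix (Fin 1) (Fin 3) (ZMod 3)) * M = 0 := by
      ext i j
      fin_cases i <;> fin_cases j <;>
        simp [hM, M3, Matrix.mul_apply, Fin.sum_univ_three, Matrix.vecHead, Matrix.vecTail] <;> ring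
    have h := Matrix.rank_add_rank_le_card_of_mul_eq_zero hmul
    have hA1 : 1 ≤ (!![1, 1, 1] : Matrix (Fin 1) (Fin 3) (ZMod 3)).rank := by
      have hprod : (!![1, 1, 1] : Matrix (Fin 1) (Fin 3) (ZMod 3)) *
          (!![1; 0; 0] : Matrix (Fin 3) (Fin 1) (ZMod 3)) = 1 := by
        ext i j
        fin_cases i <;> fin_cases j <;> decide
      have := Matrix.rank_mul_le_left (!![1, 1, 1] : Matrix (Fin 1) (Fin 3) (ZMod 3))
        (!![1; 0; 0] : Matrix (Fin 3) (Fin 1) (ZMod 3))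
      rw [hprod, Matrix.rank_one] at this
      simpa using this
    simp only [Fintype.card_fin] at h
    omega
  -- Lower bound: a 2×2 minor (rows 0,2, columns 0,1) is invertible.
  have hlb : 2 ≤ M.rank := by
    set P : Matrix (Fin 2) (Fin 3) (ZMod 3) := !![1, 0, 0; 0, 0, 1] with hP
    set Q : Matrix (Fin 3) (Fin 2) (ZMod 3) := !![1, 0; 0, 1; 0, 0] with hQ
    have hPMQ : P * M * Q = !![-a12 * v2, a21 * v1; 0, a23 * v3] := by
      ext i j
      fin_cases i <;> fin_cases j <;>
        simp [hP, hQ, hM, M3, Matrix.mul_apply, Fin.sum_univ_three, Matrix.vecHead, Matrix.vecTail] <;> ring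
    have hdet : (!![-a12 * v2, a21 * v1; 0, a23 * v3] :
        Matrix (Fin 2) (Fin 2) (ZMod 3)).det ≠ 0 := by
      rw [Matrix.det_fin_two_of]
      simp only [zero_mul, mul_zero, sub_zero]
      exact mul_ne_zero (mul_ne_zero (neg_ne_zero.mpr h12) hv2) (mul_ne_zero h23 hv3)
    have hunit : IsUnit (!![-a12 * v2, a21 * v1; 0, a23 * v3] :
        Matrix (Fin 2) (Fin 2) (ZMod 3)) := by
      rw [Matrix.isUnit_iff_isUnit_det]
      exact isUnit_iff_ne_zero.mpr hdet
    have hr2 : (!![-a12 * v2, a21 * v1; 0, a23 * v3] :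
        Matrix (Fin 2) (Fin 2) (ZMod 3)).rank = 2 := by
      rw [Matrix.rank_of_isUnit _ hunit, Fintype.card_fin]
    have h1 : (P * M * Q).rank ≤ (P * M).rank := Matrix.rank_mul_le_left _ _
    have h2 : (P * M).rank ≤ M.rank := Matrix.rank_mul_le_right _ _
    rw [hPMQ, hr2] at h1
    omega
  omega
end
end

section
/- Matrix core of Theorem B. Let a_ij (1 ≤ i, j ≤ 4, i ≠ j) and v₁, v₂, v₃, v₄ be elements of ZMod 3 with a₁₃ = a₁₄ = a₂₄ = 0, a₁₂ ≠ 0, a₂₃ ≠ 0, a₃₄ ≠ 0, v₂ ≠ 0, v₃ ≠ 0, and v₄ ≠ 0 (the remaining parameters a₂₁, a₃₁, a₄₁, a₃₂, a₄₂, a₄₃, v₁ arbitrary). Then the matrix M₄ has rank exactly 3 over ZMod 3. -/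
open Matrix

noncomputable section

/-- The 4×4 system matrix (formula (4)) of a cyclic cubic field whose conductor
has `t = 4` prime divisors. -/
def M4 (a12 a13 a14 a21 a23 a24 a31 a32 a34 a41 a42 a43 v1 v2 v3 v4 : ZMod 3) :
    Matrix (Fin 4) (Fin 4) (ZMod 3) :=
  !![-a12 * v2 - a13 * v3 - a14 * v4, a21 * v1, a31 * v1, a41 * v1;
     a12 * v2, -a21 * v1 - a23 * v3 - a24 * v4, a32 * v2, a42 * v2;
     a13 * v3, a23 * v3, -a31 * v1 - a32 * v2 - a34 * v4, a43 * v3;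
     a14 * v4, a24 * v4, a34 * v4, -a41 * v1 - a42 * v2 - a43 * v3]

lemma aux_li (x y z w1 w2 w3 w4 w5 : ZMod 3) (hx : x ≠ 0) (hy : y ≠ 0) (hz : z ≠ 0) :
    LinearIndependent (ZMod 3)
      (![![-x, x, 0, 0], ![w1, w2, y, 0], ![w3, w4, w5, z]] :
        Fin 3 → (Fin 4 → ZMod 3)) := by
  rw [Fintype.linearIndependent_iff]
  intro g hg
  have h3 := congrFun hg 3
  have h2 := congrFun hg 2
  have h0 := congrFun hg 0
  simp [Fin.sum_univ_three] at h3 h2 h0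
  have hg2 : g 2 = 0 := h3.resolve_right hz
  rw [hg2, zero_mul, add_zero] at h2
  have hg1 : g 1 = 0 := (mul_eq_zero.mp h2).resolve_right hy
  rw [hg1, hg2, zero_mul, zero_mul, add_zero, add_zero, neg_eq_zero] at h0
  have hg0 : g 0 = 0 := (mul_eq_zero.mp h0).resolve_right hx
  intro i
  fin_cases i <;> assumption

/-- **Matrix core of Theorem B.**
If `a₁₃ = a₁₄ = a₂₄ = 0`, `a₁₂ ≠ 0`, `a₂₃ ≠ 0`, `a₃₄ ≠ 0`, `v₂ ≠ 0`, `v₃ ≠ 0`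
and `v₄ ≠ 0`, then the system matrix `M4` has rank exactly 3 over `ZMod 3`. -/
theorem M4_rank_eq_three_of_theoremB
    (a12 a13 a14 a21 a23 a24 a31 a32 a34 a41 a42 a43 v1 v2 v3 v4 : ZMod 3)
    (h13 : a13 = 0) (h14 : a14 = 0) (h24 : a24 = 0)
    (h12 : a12 ≠ 0) (h23 : a23 ≠ 0) (h34 : a34 ≠ 0)
    (hv2 : v2 ≠ 0) (hv3 : v3 ≠ 0) (hv4 : v4 ≠ 0) :
    (M4 a12 a13 a14 a21 a23 a24 a31 a32 a34 a41 a42 a43 v1 v2 v3 v4).rank = 3 := by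
  subst h13 h14 h24
  set M := M4 a12 0 0 a21 a23 0 a31 a32 a34 a41 a42 a43 v1 v2 v3 v4 with hM
  -- Upper bound: the all-ones row vector annihilates `M` (columns sum to zero).
  have hub : M.rank ≤ 3 := by
    have hA : (Matrix.of (fun _ _ => (1 : ZMod 3)) : Matrix (Fin 1) (Fin 4) (ZMod 3)) * M = 0 := by
      ext i j
      rw [Matrix.mul_apply, Fin.sum_univ_four, Matrix.zero_apply]
      fin_cases j <;> simp [hM, M4, Matrix.vecHead, Matrix.vecTail] <;> ring
    have h1 : (Matrix.of (fun _ _ => (1 : ZMod 3)) : Matrix (Fin 1) (Fin 4) (ZMod 3)).rank = 1 := by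
      have hli : LinearIndependent (ZMod 3)
          (Matrix.of (fun _ _ => (1 : ZMod 3)) : Matrix (Fin 1) (Fin 4) (ZMod 3)) := by
        refine LinearIndependent.of_subsingleton 0 ?_
        intro h
        have := congrFun h 0
        simp at this
      simpa using hli.rank_matrix
    have := Matrix.rank_add_rank_le_card_of_mul_eq_zero hA
    rw [h1] at this
    simp only [Fintype.card_fin] at this
    omega
  -- Lower bound: columns 0, 1, 2 of `M` are linearly independent.
  have hlb : 3 ≤ M.rank := by
    set v : Fin 3 → (Fin 4 → ZMod 3) :=
      ![![-(a12 * v2), a12 * v2, 0, 0],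
        ![a21 * v1, -(a21 * v1) - a23 * v3, a23 * v3, 0],
        ![a31 * v1, a32 * v2, -(a31 * v1) - a32 * v2 - a34 * v4, a34 * v4]] with hv
    have hli : LinearIndependent (ZMod 3) v :=
      aux_li _ _ _ _ _ _ _ _ (mul_ne_zero h12 hv2) (mul_ne_zero h23 hv3) (mul_ne_zero h34 hv4)
    have hc0 : Mᵀ 0 = v 0 := by
      funext i; fin_cases i <;> (simp [hM, M4, hv, Matrix.vecHead, Matrix.vecTail]; try ring)
    have hc1 : Mᵀ 1 = v 1 := by
      funext i; fin_cases i <;> (simp [hM, M4, hv, Matrix.vecHead, Matrix.vecTail]; try ring)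
    have hc2 : Mᵀ 2 = v 2 := by
      funext i; fin_cases i <;> (simp [hM, M4, hv, Matrix.vecHead, Matrix.vecTail]; try ring)
    have hspan : Submodule.span (ZMod 3) (Set.range v) ≤
        Submodule.span (ZMod 3) (Set.range Mᵀ) := by
      apply Submodule.span_mono
      rintro _ ⟨j, rfl⟩
      fin_cases j
      · exact ⟨0, hc0⟩
      · exact ⟨1, hc1⟩
      · exact ⟨2, hc2⟩
    have hcard : Module.finrank (ZMod 3) (Submodule.span (ZMod 3) (Set.range v)) = 3 := by
      simpa using finrank_span_eq_card hli
    calc (3 : ℕ) = Module.finrank (ZMod 3) (Submodule.span (ZMod 3) (Set.range v)) := hcard.symm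
      _ ≤ Module.finrank (ZMod 3) (Submodule.span (ZMod 3) (Set.range Mᵀ)) :=
          Submodule.finrank_mono hspan
      _ = M.rank := (Matrix.rank_eq_finrank_span_cols M).symm
  omega
end
end

section
/- Computational claim for Graph III.1 (from the proof of Theorem D). If all nine parameters a₁₂, a₁₃, a₂₁, a₂₃, a₃₁, a₃₂, v₁, v₂, v₃ lie in the subset {1, 2} of ZMod 3 (i.e. are units) and a₁₂·a₂₃·a₃₁ ≠ a₁₃·a₃₂·a₂₁ (the δ-invariant δ = a₁₂a₂₃a₃₁ − a₁₃a₃₂a₂₁ is nonzero), then the matrix M₃ has rank exactly 2 over ZMod 3. -/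
open Matrix

noncomputable section

/-- Row-selection matrix. -/
def Esel (f : Fin 2 → Fin 3) : Matrix (Fin 2) (Fin 3) (ZMod 3) :=
  Matrix.of fun i j => if f i = j then 1 else 0

/-- Column-selection matrix. -/
def Fsel (g : Fin 2 → Fin 3) : Matrix (Fin 3) (Fin 2) (ZMod 3) :=
  Matrix.of fun i j => if i = g j then 1 else 0

lemma submatrix_eq_mul (A : Matrix (Fin 3) (Fin 3) (ZMod 3)) (f g : Fin 2 → Fin 3) :
    A.submatrix f g = Esel f * A * Fsel g := by
  ext i j
  simp [Esel, Fsel, Matrix.mul_apply, Fin.sum_univ_three, ite_and, Finset.sum_ite_eq,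
    Finset.sum_ite_eq', mul_ite, ite_mul]

lemma two_le_rank_of_minor (A : Matrix (Fin 3) (Fin 3) (ZMod 3)) (k l : Fin 3)
    (h : A 0 k * A 1 l - A 0 l * A 1 k ≠ 0) : 2 ≤ A.rank := by
  have hd : (A.submatrix ![0, 1] ![k, l]).det ≠ 0 := by
    rw [Matrix.det_fin_two]
    simpa using h
  have hu : IsUnit (A.submatrix ![0, 1] ![k, l]) :=
    (Matrix.isUnit_iff_isUnit_det _).2 (isUnit_iff_ne_zero.2 hd)
  have h2 : (A.submatrix ![0, 1] ![k, l]).rank = 2 := by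
    simpa using Matrix.rank_of_isUnit _ hu
  calc 2 = (A.submatrix ![0, 1] ![k, l]).rank := h2.symm
    _ = (Esel ![0, 1] * A * Fsel ![k, l]).rank := by rw [submatrix_eq_mul]
    _ ≤ (A * Fsel ![k, l]).rank := by
        rw [Matrix.mul_assoc]; exact Matrix.rank_mul_le_right _ _
    _ ≤ A.rank := Matrix.rank_mul_le_left _ _

lemma rank_le_two_of_rows_sum (A : Matrix (Fin 3) (Fin 3) (ZMod 3))
    (h : ∀ j, A 0 j + A 1 j + A 2 j = 0) : A.rank ≤ 2 := by
  set B : Matrix (Fin 1) (Fin 3) (ZMod 3) := Matrix.of fun _ _ => 1 with hB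
  have hmul : B * A = 0 := by
    ext i j
    simpa [B, Matrix.mul_apply, Fin.sum_univ_three, add_assoc] using h j
  have hle := Matrix.rank_add_rank_le_card_of_mul_eq_zero hmul
  have hBr : B.rank = 1 := by
    have hli : LinearIndependent (ZMod 3) B := by
      refine LinearIndependent.of_subsingleton 0 ?_
      intro hzero
      have := congrFun hzero 0
      simp [B] at this
    simpa using hli.rank_matrix
  simp only [hBr, Fintype.card_fin] at hle
  omega

/-- **Computational claim for Graph III.1 (from the proof of Theorem D).**
If all nine parameters lie in `{1, 2} ⊆ ZMod 3` and the δ-invariant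
`δ = a₁₂a₂₃a₃₁ − a₁₃a₃₂a₂₁` is nonzero, then `M3` has rank exactly 2. -/
theorem M3_rank_eq_two_of_graphIII1 (a12 a13 a21 a23 a31 a32 v1 v2 v3 : ZMod 3)
    (h12 : a12 ∈ ({1, 2} : Set (ZMod 3))) (h13 : a13 ∈ ({1, 2} : Set (ZMod 3)))
    (h21 : a21 ∈ ({1, 2} : Set (ZMod 3))) (h23 : a23 ∈ ({1, 2} : Set (ZMod 3)))
    (h31 : a31 ∈ ({1, 2} : Set (ZMod 3))) (h32 : a32 ∈ ({1, 2} : Set (ZMod 3)))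
    (hv1 : v1 ∈ ({1, 2} : Set (ZMod 3))) (hv2 : v2 ∈ ({1, 2} : Set (ZMod 3)))
    (hv3 : v3 ∈ ({1, 2} : Set (ZMod 3)))
    (hδ : a12 * a23 * a31 ≠ a13 * a32 * a21) :
    (M3 a12 a13 a21 a23 a31 a32 v1 v2 v3).rank = 2 := by
  have hup : (M3 a12 a13 a21 a23 a31 a32 v1 v2 v3).rank ≤ 2 := by
    apply rank_le_two_of_rows_sum
    intro j
    fin_cases j <;> simp [M3] <;> ring
  simp only [Set.mem_insert_iff, Set.mem_singleton_iff] at h12 h13 h21 h23 h31 h32 hv1 hv2 hv3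
  rcases h12 with rfl | rfl <;> rcases h13 with rfl | rfl <;>
    rcases h21 with rfl | rfl <;> rcases h23 with rfl | rfl <;>
    rcases h31 with rfl | rfl <;> rcases h32 with rfl | rfl <;>
    rcases hv1 with rfl | rfl <;> rcases hv2 with rfl | rfl <;>
    rcases hv3 with rfl | rfl <;>
    first
    | exact absurd (by decide) hδ
    | exact le_antisymm hup (two_le_rank_of_minor _ 0 1 (by decide))
    | exact le_antisymm hup (two_le_rank_of_minor _ 0 2 (by decide))
end
end

section
/- Computational claim for Graph I.2 (from the proof of Theorem D). Fix a₁₂ = a₁₃ = 0 in ZMod 3. Among the 128 = 2⁷ tuples (a₂₁, a₂₃, a₃₁, a₃₂, v₁, v₂, v₃) with every coordinate in the subset {1, 2} of ZMod 3, exactly 32 yield a matrix M₃ of rank 1 and exactly 96 yield a matrix M₃ of rank 2 over ZMod 3. -/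
set_option maxRecDepth 100000

open Matrix

noncomputable section

section aux

lemma aux_le_rank {k : ℕ} (M : Matrix (Fin 3) (Fin 3) (ZMod 3)) (f g : Fin k → Fin 3)
    (h : IsUnit (M.submatrix f g).det) : k ≤ M.rank := by
  have h1 : ((1 : Matrix (Fin 3) (Fin 3) (ZMod 3)).submatrix f (Equiv.refl _)) * M
      = M.submatrix f id := by
    simpa using Matrix.one_submatrix_mul f (Equiv.refl (Fin 3)) M
  have h2 : (M.submatrix f id) * ((1 : Matrix (Fin 3) (Fin 3) (ZMod 3)).submatrix (Equiv.refl _) g)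
      = M.submatrix f g := by
    simpa [Matrix.submatrix_submatrix] using
      Matrix.mul_submatrix_one (Equiv.refl (Fin 3)) g (M.submatrix f id)
  have hr : (M.submatrix f g).rank = k := by
    rw [Matrix.rank_of_isUnit _ ((Matrix.isUnit_iff_isUnit_det _).mpr h), Fintype.card_fin]
  calc k = (M.submatrix f g).rank := hr.symm
    _ = (((1 : Matrix (Fin 3) (Fin 3) (ZMod 3)).submatrix f (Equiv.refl _)) * M
          * ((1 : Matrix (Fin 3) (Fin 3) (ZMod 3)).submatrix (Equiv.refl _) g)).rank := by
        rw [h1, h2]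
    _ ≤ (((1 : Matrix (Fin 3) (Fin 3) (ZMod 3)).submatrix f (Equiv.refl _)) * M).rank :=
        Matrix.rank_mul_le_left _ _
    _ ≤ M.rank := Matrix.rank_mul_le_right _ _

/-- The shape of `M3 0 0 …`. -/
def N (x y z w : ZMod 3) : Matrix (Fin 3) (Fin 3) (ZMod 3) :=
  !![0, x, z; 0, -x - y, w; 0, y, -z - w]

lemma rank_N_le_two (x y z w : ZMod 3) : (N x y z w).rank ≤ 2 := by
  have hfac : N x y z w
      = (!![x, z; -x - y, w; y, -z - w] : Matrix (Fin 3) (Fin 2) (ZMod 3))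
        * (!![0, 1, 0; 0, 0, 1] : Matrix (Fin 2) (Fin 3) (ZMod 3)) := by
    ext i j
    fin_cases i <;> fin_cases j <;>
      simp [N, Matrix.mul_apply, Fin.sum_univ_succ, Matrix.vecHead, Matrix.vecTail]
  calc (N x y z w).rank
      ≤ (!![x, z; -x - y, w; y, -z - w] : Matrix (Fin 3) (Fin 2) (ZMod 3)).rank := by
        rw [hfac]; exact Matrix.rank_mul_le_left _ _
    _ ≤ 2 := (Matrix.rank_le_card_width _).trans_eq (Fintype.card_fin 2)

lemma rank_N_of_ne (x y z w : ZMod 3) (h : x * w + z * x + z * y ≠ 0) :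
    (N x y z w).rank = 2 := by
  refine le_antisymm (rank_N_le_two x y z w) ?_
  refine aux_le_rank _ ![0, 1] ![1, 2] ?_
  have hsub : (N x y z w).submatrix ![0, 1] ![1, 2] = !![x, z; -x - y, w] := by
    ext i j
    fin_cases i <;> fin_cases j <;> simp [N]
  rw [hsub, isUnit_iff_ne_zero, Matrix.det_fin_two_of]
  intro hc
  apply h
  linear_combination hc

lemma rank_N_of_eq (x y z w : ZMod 3) (hx : x ≠ 0) (h : x * w + z * x + z * y = 0) :
    (N x y z w).rank = 1 := by
  refine le_antisymm ?_ ?_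
  · -- rank ≤ 1 : the matrix is a rank-one product
    have hfac : N x y z w = Matrix.vecMulVec ![x, -x - y, y] ![0, 1, z * x⁻¹] := by
      have hxw : x * w = z * (-x - y) := by
        have := h; linear_combination h
      ext i j
      fin_cases i <;> fin_cases j <;>
        simp [N, Matrix.vecMulVec_apply, Matrix.vecHead, Matrix.vecTail] <;>
        (try field_simp) <;>
        first
          | ring1
          | linear_combination h
          | linear_combination -h
          | linear_combination 2 * h
          | linear_combination -2 * h
          | linear_combination z * h
          | linear_combination -z * h
    have hcol : Matrix.vecMulVec ![x, -x - y, y] ![0, 1, z * x⁻¹]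
        = Matrix.replicateCol (Fin 1) ![x, -x - y, y] * Matrix.replicateRow (Fin 1) ![0, 1, z * x⁻¹] :=
      Matrix.vecMulVec_eq (Fin 1) _ _
    calc (N x y z w).rank
        = (Matrix.replicateCol (Fin 1) ![x, -x - y, y] * Matrix.replicateRow (Fin 1) ![0, 1, z * x⁻¹]).rank := by
          rw [hfac, hcol]
      _ ≤ (Matrix.replicateCol (Fin 1) ![x, -x - y, y]).rank := Matrix.rank_mul_le_left _ _
      _ ≤ 1 := by simpa using Matrix.rank_le_card_width (Matrix.replicateCol (Fin 1) ![x, -x - y, y])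
  · refine aux_le_rank _ ![0] ![1] ?_
    have hsub : (N x y z w).submatrix ![0] ![1] = !![x] := by
      ext i j
      fin_cases i <;> fin_cases j <;> simp [N]
    rw [hsub, Matrix.det_fin_one]
    simpa [isUnit_iff_ne_zero] using hx

end aux

/-- **Computational claim for Graph I.2 (from the proof of Theorem D).**
Fix `a₁₂ = a₁₃ = 0`. Among the `128 = 2⁷` tuples
`(a₂₁, a₂₃, a₃₁, a₃₂, v₁, v₂, v₃)` with every coordinate in `{1, 2} ⊆ ZMod 3`,
exactly 32 give a matrix `M3` of rank 1 and exactly 96 give a matrix `M3` of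
rank 2. -/
theorem M3_count_graphI2 :
    {t : Fin 7 → ZMod 3 | (∀ i, t i ∈ ({1, 2} : Set (ZMod 3))) ∧
      (M3 0 0 (t 0) (t 1) (t 2) (t 3) (t 4) (t 5) (t 6)).rank = 1}.ncard = 32 ∧
    {t : Fin 7 → ZMod 3 | (∀ i, t i ∈ ({1, 2} : Set (ZMod 3))) ∧
      (M3 0 0 (t 0) (t 1) (t 2) (t 3) (t 4) (t 5) (t 6)).rank = 2}.ncard = 96 := by
  have hM : ∀ t : Fin 7 → ZMod 3,
      M3 0 0 (t 0) (t 1) (t 2) (t 3) (t 4) (t 5) (t 6)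
        = N (t 0 * t 4) (t 1 * t 6) (t 2 * t 4) (t 3 * t 5) := by
    intro t
    simp only [M3, N]
    norm_num
  have hne : ∀ a : ZMod 3, a ∈ ({1, 2} : Set (ZMod 3)) → a ≠ 0 := by
    rintro a (rfl | rfl) <;> decide
  have key : ∀ t : Fin 7 → ZMod 3, (∀ i, t i ∈ ({1, 2} : Set (ZMod 3))) →
      ((M3 0 0 (t 0) (t 1) (t 2) (t 3) (t 4) (t 5) (t 6)).rank = 1 ↔
        (t 0 * t 4) * (t 3 * t 5) + (t 2 * t 4) * (t 0 * t 4)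
          + (t 2 * t 4) * (t 1 * t 6) = 0) ∧
      ((M3 0 0 (t 0) (t 1) (t 2) (t 3) (t 4) (t 5) (t 6)).rank = 2 ↔
        (t 0 * t 4) * (t 3 * t 5) + (t 2 * t 4) * (t 0 * t 4)
          + (t 2 * t 4) * (t 1 * t 6) ≠ 0) := by
    intro t ht
    have hx : t 0 * t 4 ≠ 0 := mul_ne_zero (hne _ (ht 0)) (hne _ (ht 4))
    rw [hM t]
    by_cases h : (t 0 * t 4) * (t 3 * t 5) + (t 2 * t 4) * (t 0 * t 4)
        + (t 2 * t 4) * (t 1 * t 6) = 0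
    · rw [rank_N_of_eq _ _ _ _ hx h]
      simp [h]
    · rw [rank_N_of_ne _ _ _ _ h]
      simp [h]
  constructor
  · have hset : {t : Fin 7 → ZMod 3 | (∀ i, t i ∈ ({1, 2} : Set (ZMod 3))) ∧
        (M3 0 0 (t 0) (t 1) (t 2) (t 3) (t 4) (t 5) (t 6)).rank = 1}
        = ↑(Finset.univ.filter fun t : Fin 7 → ZMod 3 =>
            (∀ i, t i = 1 ∨ t i = 2) ∧
            (t 0 * t 4) * (t 3 * t 5) + (t 2 * t 4) * (t 0 * t 4)
              + (t 2 * t 4) * (t 1 * t 6) = 0) := by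
      ext t
      simp only [Set.mem_setOf_eq, Finset.coe_filter, Finset.mem_univ, true_and,
        Set.mem_insert_iff, Set.mem_singleton_iff]
      constructor
      · rintro ⟨h1, h2⟩
        exact ⟨h1, ((key t h1).1.mp h2)⟩
      · rintro ⟨h1, h2⟩
        exact ⟨h1, ((key t h1).1.mpr h2)⟩
    rw [hset, Set.ncard_coe_finset]
    decide
  · have hset : {t : Fin 7 → ZMod 3 | (∀ i, t i ∈ ({1, 2} : Set (ZMod 3))) ∧
        (M3 0 0 (t 0) (t 1) (t 2) (t 3) (t 4) (t 5) (t 6)).rank = 2}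
        = ↑(Finset.univ.filter fun t : Fin 7 → ZMod 3 =>
            (∀ i, t i = 1 ∨ t i = 2) ∧
            ¬((t 0 * t 4) * (t 3 * t 5) + (t 2 * t 4) * (t 0 * t 4)
              + (t 2 * t 4) * (t 1 * t 6) = 0)) := by
      ext t
      simp only [Set.mem_setOf_eq, Finset.coe_filter, Finset.mem_univ, true_and,
        Set.mem_insert_iff, Set.mem_singleton_iff]
      constructor
      · rintro ⟨h1, h2⟩
        exact ⟨h1, ((key t h1).2.mp h2)⟩
      · rintro ⟨h1, h2⟩
        exact ⟨h1, ((key t h1).2.mpr h2)⟩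
    rw [hset, Set.ncard_coe_finset]
    decide
end
end

section
/- Computational claim for Graph II.1 (from the proof of Theorem D). Fix a₁₂ = a₃₂ = 0 in ZMod 3. Among the 128 = 2⁷ tuples (a₁₃, a₂₁, a₂₃, a₃₁, v₁, v₂, v₃) with every coordinate in the subset {1, 2} of ZMod 3, exactly 64 yield a matrix M₃ of rank 1 and exactly 64 yield a matrix M₃ of rank 2 over ZMod 3. -/
set_option maxRecDepth 40000
set_option maxHeartbeats 4000000

open Matrix

noncomputable section

lemma M3_rank_one (x y z w : ZMod 3) (hx : x ≠ 0) (h : y + w = 0) :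
    (!![-x, y, z; 0, -y - w, 0; x, w, -z] : Matrix (Fin 3) (Fin 3) (ZMod 3)).rank = 1 := by
  rw [Matrix.rank_eq_finrank_span_row]
  have hw : w = -y := by linear_combination h
  subst hw
  have hsp : Submodule.span (ZMod 3)
      (Set.range (!![-x, y, z; 0, -y - -y, 0; x, -y, -z] : Matrix (Fin 3) (Fin 3) (ZMod 3)))
      = Submodule.span (ZMod 3) {![-x, y, z]} := by
    apply le_antisymm
    · rw [Submodule.span_le]
      rintro v ⟨i, rfl⟩
      fin_cases i
      · exact Submodule.subset_span rfl
      · show _ ∈ Submodule.span (ZMod 3) {![-x, y, z]}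
        convert (Submodule.span (ZMod 3) {![-x, y, z]}).zero_mem using 1
        ext j; fin_cases j <;> simp
      · have : (!![-x, y, z; 0, -y - -y, 0; x, -y, -z] : Matrix (Fin 3) (Fin 3) (ZMod 3)) 2
            = (-1 : ZMod 3) • ![-x, y, z] := by
          ext j; fin_cases j <;> simp
        show _ ∈ Submodule.span (ZMod 3) {![-x, y, z]}
        rw [show (!![-x, y, z; 0, -y - -y, 0; x, -y, -z] : Matrix (Fin 3) (Fin 3) (ZMod 3)) ((fun i => i) (⟨2, by norm_num⟩ : Fin 3)) = (!![-x, y, z; 0, -y - -y, 0; x, -y, -z] : Matrix (Fin 3) (Fin 3) (ZMod 3)) 2 from rfl, this]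
        exact Submodule.smul_mem _ _ (Submodule.subset_span rfl)
    · exact Submodule.span_mono (by rintro v rfl; exact ⟨0, by ext j; fin_cases j <;> simp⟩)
  rw [Matrix.row, hsp, finrank_span_singleton]
  intro hv
  apply hx
  have := congrFun hv 0
  simpa using (neg_eq_zero.mp (by simpa using this))

lemma M3_rank_two (x y z w : ZMod 3) (hx : x ≠ 0) (h : y + w ≠ 0) :
    (!![-x, y, z; 0, -y - w, 0; x, w, -z] : Matrix (Fin 3) (Fin 3) (ZMod 3)).rank = 2 := by
  rw [Matrix.rank_eq_finrank_span_row]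
  have hli : LinearIndependent (ZMod 3) ![![-x, y, z], ![(0:ZMod 3), -y - w, 0]] := by
    rw [LinearIndependent.pair_iff]
    intro s t hst
    have h0 := congrFun hst 0
    have h1 := congrFun hst 1
    simp [Matrix.smul_cons] at h0 h1
    have hs : s = 0 := by
      rcases h0 with h0 | h0
      · exact h0
      · exact absurd h0 hx
    subst hs
    simp at h1
    rcases h1 with h1 | h1
    · exact ⟨rfl, h1⟩
    · exact absurd (by linear_combination -h1) h
  have hsp : Submodule.span (ZMod 3)
      (Set.range (!![-x, y, z; 0, -y - w, 0; x, w, -z] : Matrix (Fin 3) (Fin 3) (ZMod 3)))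
      = Submodule.span (ZMod 3) (Set.range ![![-x, y, z], ![(0:ZMod 3), -y - w, 0]]) := by
    apply le_antisymm
    · rw [Submodule.span_le]
      rintro v ⟨i, rfl⟩
      fin_cases i
      · exact Submodule.subset_span ⟨0, rfl⟩
      · exact Submodule.subset_span ⟨1, rfl⟩
      · show (!![-x, y, z; 0, -y - w, 0; x, w, -z] : Matrix (Fin 3) (Fin 3) (ZMod 3)) 2 ∈ _
        have : (!![-x, y, z; 0, -y - w, 0; x, w, -z] : Matrix (Fin 3) (Fin 3) (ZMod 3)) 2
            = (-1 : ZMod 3) • ![-x, y, z] + (-1 : ZMod 3) • ![(0:ZMod 3), -y - w, 0] := by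
          ext j; fin_cases j <;> simp
        rw [this]
        exact Submodule.add_mem _ (Submodule.smul_mem _ _ (Submodule.subset_span ⟨0, rfl⟩))
          (Submodule.smul_mem _ _ (Submodule.subset_span ⟨1, rfl⟩))
    · rw [Submodule.span_le]
      rintro v ⟨i, rfl⟩
      fin_cases i
      · exact Submodule.subset_span ⟨0, rfl⟩
      · exact Submodule.subset_span ⟨1, rfl⟩
  rw [Matrix.row, hsp, finrank_span_eq_card hli]
  rfl

lemma M3_eq_aux (t : Fin 7 → ZMod 3) :
    M3 0 (t 0) (t 1) (t 2) (t 3) 0 (t 4) (t 5) (t 6) =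
    !![-(t 0 * t 6), t 1 * t 4, t 3 * t 4;
       0, -(t 1 * t 4) - t 2 * t 6, 0;
       t 0 * t 6, t 2 * t 6, -(t 3 * t 4)] := by
  unfold M3
  ext i j
  fin_cases i <;> fin_cases j <;> simp

lemma M3_rank_char (t : Fin 7 → ZMod 3) (h : ∀ i, t i ∈ ({1, 2} : Set (ZMod 3))) :
    (M3 0 (t 0) (t 1) (t 2) (t 3) 0 (t 4) (t 5) (t 6)).rank =
      if t 1 * t 4 + t 2 * t 6 = 0 then 1 else 2 := by
  have hne : ∀ i, t i ≠ 0 := by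
    intro i hi
    rcases h i with h1 | h2
    · rw [hi] at h1; exact one_ne_zero h1.symm
    · rw [hi] at h2; simp at h2; exact (by decide : (2:ZMod 3) ≠ 0) h2.symm
  have hx : t 0 * t 6 ≠ 0 := mul_ne_zero (hne 0) (hne 6)
  rw [M3_eq_aux]
  split_ifs with hc
  · exact M3_rank_one _ _ _ _ hx hc
  · exact M3_rank_two _ _ _ _ hx hc

/-- **Computational claim for Graph II.1 (from the proof of Theorem D).**
Fix `a₁₂ = a₃₂ = 0`. Among the `128 = 2⁷` tuples
`(a₁₃, a₂₁, a₂₃, a₃₁, v₁, v₂, v₃)` with every coordinate in `{1, 2} ⊆ ZMod 3`,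
exactly 64 give a matrix `M3` of rank 1 and exactly 64 give a matrix `M3` of
rank 2. -/
theorem M3_count_graphII1 :
    {t : Fin 7 → ZMod 3 | (∀ i, t i ∈ ({1, 2} : Set (ZMod 3))) ∧
      (M3 0 (t 0) (t 1) (t 2) (t 3) 0 (t 4) (t 5) (t 6)).rank = 1}.ncard = 64 ∧
    {t : Fin 7 → ZMod 3 | (∀ i, t i ∈ ({1, 2} : Set (ZMod 3))) ∧
      (M3 0 (t 0) (t 1) (t 2) (t 3) 0 (t 4) (t 5) (t 6)).rank = 2}.ncard = 64 := by
  have key1 : {t : Fin 7 → ZMod 3 | (∀ i, t i ∈ ({1, 2} : Set (ZMod 3))) ∧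
      (M3 0 (t 0) (t 1) (t 2) (t 3) 0 (t 4) (t 5) (t 6)).rank = 1} =
      ↑(Finset.univ.filter fun t : Fin 7 → ZMod 3 =>
        (∀ i, t i = 1 ∨ t i = 2) ∧ t 1 * t 4 + t 2 * t 6 = 0) := by
    ext t
    simp only [Set.mem_setOf_eq, Finset.coe_filter, Finset.mem_univ, true_and,
      Set.mem_insert_iff, Set.mem_singleton_iff]
    constructor
    · rintro ⟨hmem, hrk⟩
      refine ⟨hmem, ?_⟩
      rw [M3_rank_char t hmem] at hrk
      by_contra hc
      rw [if_neg hc] at hrk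
      exact (by norm_num : (2:ℕ) ≠ 1) hrk
    · rintro ⟨hmem, hc⟩
      exact ⟨hmem, by rw [M3_rank_char t hmem, if_pos hc]⟩
  have key2 : {t : Fin 7 → ZMod 3 | (∀ i, t i ∈ ({1, 2} : Set (ZMod 3))) ∧
      (M3 0 (t 0) (t 1) (t 2) (t 3) 0 (t 4) (t 5) (t 6)).rank = 2} =
      ↑(Finset.univ.filter fun t : Fin 7 → ZMod 3 =>
        (∀ i, t i = 1 ∨ t i = 2) ∧ t 1 * t 4 + t 2 * t 6 ≠ 0) := by
    ext t
    simp only [Set.mem_setOf_eq, Finset.coe_filter, Finset.mem_univ, true_and,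
      Set.mem_insert_iff, Set.mem_singleton_iff]
    constructor
    · rintro ⟨hmem, hrk⟩
      refine ⟨hmem, ?_⟩
      rw [M3_rank_char t hmem] at hrk
      intro hc
      rw [if_pos hc] at hrk
      exact (by norm_num : (1:ℕ) ≠ 2) hrk
    · rintro ⟨hmem, hc⟩
      exact ⟨hmem, by rw [M3_rank_char t hmem, if_neg hc]⟩
  rw [key1, key2, Set.ncard_coe_finset, Set.ncard_coe_finset]
  constructor <;> decide
end
end

section
/- Computational claim for Graph II.2 (from the proof of Theorem D). Fix a₁₂ = a₁₃ = a₂₃ = 0 in ZMod 3. Among the 64 = 2⁶ tuples (a₂₁, a₃₁, a₃₂, v₁, v₂, v₃) with every coordinate in the subset {1, 2} of ZMod 3, exactly 32 yield a matrix M₃ of rank 1 and exactly 32 yield a matrix M₃ of rank 2 over ZMod 3. -/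
open Matrix

lemma aux_rank_one (b c : ZMod 3) (hb : b ≠ 0) :
    (!![0, b, c; 0, -b, -c; 0, 0, 0] : Matrix (Fin 3) (Fin 3) (ZMod 3)).rank = 1 := by
  rw [Matrix.rank_eq_finrank_span_row]
  have h : Submodule.span (ZMod 3) (Set.range (!![0, b, c; 0, -b, -c; 0, 0, 0] : Matrix (Fin 3) (Fin 3) (ZMod 3)))
      = Submodule.span (ZMod 3) {![0, b, c]} := by
    apply le_antisymm
    · rw [Submodule.span_le]
      apply Set.range_subset_iff.mpr
      intro i
      fin_cases i
      · exact Submodule.subset_span rfl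
      · show (!![0, b, c; 0, -b, -c; 0, 0, 0] : Matrix (Fin 3) (Fin 3) (ZMod 3)) 1 ∈ _
        have h1 : (!![0, b, c; 0, -b, -c; 0, 0, 0] : Matrix (Fin 3) (Fin 3) (ZMod 3)) 1
            = -![0, b, c] := by
          funext j; fin_cases j <;> simp [Matrix.vecHead, Matrix.vecTail]
        rw [h1]
        exact neg_mem (Submodule.subset_span rfl)
      · show (!![0, b, c; 0, -b, -c; 0, 0, 0] : Matrix (Fin 3) (Fin 3) (ZMod 3)) 2 ∈ _
        have h2 : (!![0, b, c; 0, -b, -c; 0, 0, 0] : Matrix (Fin 3) (Fin 3) (ZMod 3)) 2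
            = 0 := by
          funext j; fin_cases j <;> simp [Matrix.vecHead, Matrix.vecTail]
        rw [h2]; exact zero_mem _
    · rw [Submodule.span_le]
      rintro v rfl
      exact Submodule.subset_span ⟨0, rfl⟩
  erw [h]
  exact finrank_span_singleton (by
    intro h0
    apply hb
    have := congrFun h0 1
    simpa using this)

lemma aux_rank_two (b c d : ZMod 3) (hb : b ≠ 0) (he : c + d ≠ 0) :
    (!![0, b, c; 0, -b, d; 0, 0, -c - d] : Matrix (Fin 3) (Fin 3) (ZMod 3)).rank = 2 := by
  rw [Matrix.rank_eq_finrank_span_row]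
  have h : Submodule.span (ZMod 3) (Set.range (!![0, b, c; 0, -b, d; 0, 0, -c - d] : Matrix (Fin 3) (Fin 3) (ZMod 3)))
      = Submodule.span (ZMod 3) (Set.range ![![0, b, c], ![0, -b, d]]) := by
    apply le_antisymm
    · rw [Submodule.span_le]
      apply Set.range_subset_iff.mpr
      intro i
      fin_cases i
      · exact Submodule.subset_span ⟨0, rfl⟩
      · exact Submodule.subset_span ⟨1, rfl⟩
      · show (!![0, b, c; 0, -b, d; 0, 0, -c - d] : Matrix (Fin 3) (Fin 3) (ZMod 3)) 2 ∈ _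
        have h2 : (!![0, b, c; 0, -b, d; 0, 0, -c - d] : Matrix (Fin 3) (Fin 3) (ZMod 3)) 2
            = -![0, b, c] - ![0, -b, d] := by
          funext j; fin_cases j <;> simp [Matrix.vecHead, Matrix.vecTail]
        rw [h2]
        exact sub_mem (neg_mem (Submodule.subset_span ⟨0, rfl⟩)) (Submodule.subset_span ⟨1, rfl⟩)
    · rw [Submodule.span_le]
      apply Set.range_subset_iff.mpr
      intro i
      fin_cases i
      · exact Submodule.subset_span ⟨0, rfl⟩
      · exact Submodule.subset_span ⟨1, rfl⟩
  erw [h, finrank_span_eq_card]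
  · simp
  · rw [LinearIndependent.pair_iff]
    intro s t hst
    have h1 := congrFun hst 1
    have h2 := congrFun hst 2
    simp only [Pi.add_apply, Pi.smul_apply, smul_eq_mul, Pi.zero_apply,
      Matrix.cons_val_one, Matrix.head_cons, Matrix.cons_val_two, Matrix.tail_cons, Matrix.cons_val_zero] at h1 h2
    have hst' : s = t := by
      have : (s - t) * b = 0 := by linear_combination h1
      rcases mul_eq_zero.mp this with h | h
      · exact sub_eq_zero.mp h
      · exact absurd h hb
    subst hst'
    have : s * (c + d) = 0 := by linear_combination h2
    rcases mul_eq_zero.mp this with h | h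
    · exact ⟨h, h⟩
    · exact absurd h he

noncomputable section

lemma ne_zero_of_mem12 {x : ZMod 3} (h : x = 1 ∨ x = 2) : x ≠ 0 := by
  rcases h with h | h <;> rw [h] <;> decide

lemma M3_rank_iff (a b c v1 v2 v3 : ZMod 3)
    (ha : a = 1 ∨ a = 2)
    (h1 : v1 = 1 ∨ v1 = 2) :
    ((M3 0 0 a 0 b c v1 v2 v3).rank = 1 ↔ b * v1 + c * v2 = 0) ∧
    ((M3 0 0 a 0 b c v1 v2 v3).rank = 2 ↔ b * v1 + c * v2 ≠ 0) := by
  have hB : a * v1 ≠ 0 := mul_ne_zero (ne_zero_of_mem12 ha) (ne_zero_of_mem12 h1)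
  have hM : M3 0 0 a 0 b c v1 v2 v3
      = !![0, a * v1, b * v1; 0, -(a * v1), c * v2; 0, 0, -(b * v1) - c * v2] := by
    unfold M3
    ext i j
    fin_cases i <;> fin_cases j <;> simp <;> ring
  by_cases he : b * v1 + c * v2 = 0
  · have hr : (M3 0 0 a 0 b c v1 v2 v3).rank = 1 := by
      rw [hM]
      have hcv : c * v2 = -(b * v1) := by linear_combination he
      have hMM : (!![0, a * v1, b * v1; 0, -(a * v1), c * v2; 0, 0, -(b * v1) - c * v2]
          : Matrix (Fin 3) (Fin 3) (ZMod 3))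
          = !![0, a * v1, b * v1; 0, -(a * v1), -(b * v1); 0, 0, 0] := by
        rw [hcv]; ring_nf
      rw [hMM]
      exact aux_rank_one _ _ hB
    constructor
    · exact ⟨fun _ => he, fun _ => hr⟩
    · constructor
      · intro h; rw [hr] at h; exact absurd h (by norm_num)
      · intro h; exact absurd he h
  · have hr : (M3 0 0 a 0 b c v1 v2 v3).rank = 2 := by
      rw [hM]
      exact aux_rank_two _ _ _ hB he
    constructor
    · constructor
      · intro h; rw [hr] at h; exact absurd h (by norm_num)
      · intro h; exact absurd h he
    · exact ⟨fun _ => he, fun _ => hr⟩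

/-- **Computational claim for Graph II.2 (from the proof of Theorem D).**
Fix `a₁₂ = a₁₃ = a₂₃ = 0`. Among the `64 = 2⁶` tuples
`(a₂₁, a₃₁, a₃₂, v₁, v₂, v₃)` with every coordinate in `{1, 2} ⊆ ZMod 3`,
exactly 32 give a matrix `M3` of rank 1 and exactly 32 give a matrix `M3` of
rank 2. -/
theorem M3_count_graphII2 :
    {t : Fin 6 → ZMod 3 | (∀ i, t i ∈ ({1, 2} : Set (ZMod 3))) ∧
      (M3 0 0 (t 0) 0 (t 1) (t 2) (t 3) (t 4) (t 5)).rank = 1}.ncard = 32 ∧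
    {t : Fin 6 → ZMod 3 | (∀ i, t i ∈ ({1, 2} : Set (ZMod 3))) ∧
      (M3 0 0 (t 0) 0 (t 1) (t 2) (t 3) (t 4) (t 5)).rank = 2}.ncard = 32 := by
  have key : ∀ t : Fin 6 → ZMod 3, (∀ i, t i = 1 ∨ t i = 2) →
      (((M3 0 0 (t 0) 0 (t 1) (t 2) (t 3) (t 4) (t 5)).rank = 1 ↔ t 1 * t 3 + t 2 * t 4 = 0) ∧
       ((M3 0 0 (t 0) 0 (t 1) (t 2) (t 3) (t 4) (t 5)).rank = 2 ↔ t 1 * t 3 + t 2 * t 4 ≠ 0)) :=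
    fun t h => M3_rank_iff _ _ _ _ _ _ (h 0) (h 3)
  have hmem : ∀ x : ZMod 3, x ∈ ({1, 2} : Set (ZMod 3)) ↔ (x = 1 ∨ x = 2) := by
    intro x; simp [Set.mem_insert_iff]
  constructor
  · have hset : {t : Fin 6 → ZMod 3 | (∀ i, t i ∈ ({1, 2} : Set (ZMod 3))) ∧
        (M3 0 0 (t 0) 0 (t 1) (t 2) (t 3) (t 4) (t 5)).rank = 1}
        = ↑(Finset.univ.filter (fun t : Fin 6 → ZMod 3 =>
            (∀ i, t i = 1 ∨ t i = 2) ∧ t 1 * t 3 + t 2 * t 4 = 0)) := by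
      ext t
      simp only [Set.mem_setOf_eq, Finset.coe_filter, Finset.mem_univ, true_and, hmem]
      constructor
      · rintro ⟨h1, h2⟩; exact ⟨h1, ((key t h1).1).mp h2⟩
      · rintro ⟨h1, h2⟩; exact ⟨h1, ((key t h1).1).mpr h2⟩
    rw [hset, Set.ncard_coe_finset]
    decide
  · have hset : {t : Fin 6 → ZMod 3 | (∀ i, t i ∈ ({1, 2} : Set (ZMod 3))) ∧
        (M3 0 0 (t 0) 0 (t 1) (t 2) (t 3) (t 4) (t 5)).rank = 2}
        = ↑(Finset.univ.filter (fun t : Fin 6 → ZMod 3 =>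
            (∀ i, t i = 1 ∨ t i = 2) ∧ t 1 * t 3 + t 2 * t 4 ≠ 0)) := by
      ext t
      simp only [Set.mem_setOf_eq, Finset.coe_filter, Finset.mem_univ, true_and, hmem]
      constructor
      · rintro ⟨h1, h2⟩; exact ⟨h1, ((key t h1).2).mp h2⟩
      · rintro ⟨h1, h2⟩; exact ⟨h1, ((key t h1).2).mpr h2⟩
    rw [hset, Set.ncard_coe_finset]
    decide
end
end
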